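/- Let n ≥ 2 be an integer and let ε be a real number with 0 ≤ ε < 1. In the formal power series ring ℝ[[t]], consider the series G(t) = (1 − t)^{n−1} · (1 − 2t)^{−(n+1)} · ((1−ε) + εt)^{n²} · ∏_{l=2}^{n−1} (1 − ((l+1)/l)·t)^{−(n+1)}, where the inverses exist because each factor of the form 1 − c·t is a unit in ℝ[[t]]. Then every coefficient of G is nonnegative, and the coefficient of t^n in G is strictly positive. -/

import Mathlib

/-!
Let `g = (1 - 2t)⁻¹ = ∑ 2ʲ tʲ`. Since `(1 - t) g = 1 + t g`, the series factors as
`G = g · H` with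
`H = (1 + t g)^(n-1) · g^(n-(n-1)) · ((1-ε) + εt)^(n²) · ∏_l (∑ ((l+1)/l)ʲ tʲ)^(n+1)`.
Every factor of `H` has nonnegative coefficients and positive constant term, and such series
are closed under products, so all coefficients of `G` are nonnegative and
`[tⁿ] G ≥ [tⁿ] g · [t⁰] H = 2ⁿ (1-ε)^(n²) > 0`.
-/

open Finset PowerSeries

/-- The formal power series
`G(t) = (1 - t)^(n-1) · (1 - 2t)^{-(n+1)} · ((1-ε) + εt)^(n²) ·
        ∏_{l=2}^{n-1} (1 - ((l+1)/l)·t)^{-(n+1)}`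
in `ℝ[[t]]`; each factor of the form `1 - c·t` has nonzero constant coefficient and
hence is invertible in `ℝ[[t]]`. -/
noncomputable def residueSeries (n : ℕ) (ε : ℝ) : PowerSeries ℝ :=
  (1 - PowerSeries.X) ^ (n - 1) *
    ((1 - 2 * PowerSeries.X) ^ (n + 1))⁻¹ *
    (PowerSeries.C (1 - ε) + PowerSeries.C ε * PowerSeries.X) ^ (n ^ 2) *
    ∏ l ∈ Finset.Icc 2 (n - 1),
      ((1 - PowerSeries.C (((l : ℝ) + 1) / (l : ℝ)) * PowerSeries.X) ^ (n + 1))⁻¹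

namespace PowerSeries

section NonnegCoeffs

variable (R : Type*) [CommSemiring R] [PartialOrder R] [IsOrderedRing R]

def nonnegCoeffs : Subsemiring R⟦X⟧ where
  carrier := {f | ∀ j, 0 ≤ coeff j f}
  mul_mem' {f g} hf hg j := by
    rw [coeff_mul]
    exact sum_nonneg fun p _ => mul_nonneg (hf p.1) (hg p.2)
  one_mem' j := by
    rw [coeff_one]
    split_ifs
    exacts [zero_le_one, le_rfl]
  add_mem' hf hg j := by
    rw [map_add]
    exact add_nonneg (hf j) (hg j)
  zero_mem' j := by simp

variable {R}

theorem C_mem_nonnegCoeffs {a : R} (ha : 0 ≤ a) : C a ∈ nonnegCoeffs R := fun j => by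
  rw [coeff_C]
  split_ifs
  exacts [ha, le_rfl]

theorem X_mem_nonnegCoeffs : X ∈ nonnegCoeffs R := fun j => by
  rw [coeff_X]
  split_ifs
  exacts [zero_le_one, le_rfl]

theorem rescale_mem_nonnegCoeffs {a : R} (ha : 0 ≤ a) {f : R⟦X⟧} (hf : f ∈ nonnegCoeffs R) :
    rescale a f ∈ nonnegCoeffs R := fun j => by
  rw [coeff_rescale]
  exact mul_nonneg (pow_nonneg ha j) (hf j)

theorem mk_one_mem_nonnegCoeffs : mk 1 ∈ nonnegCoeffs R := fun j => by
  rw [coeff_mk]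
  exact zero_le_one

end NonnegCoeffs

section PosConstCoeff

variable (R : Type*) [CommSemiring R] [PartialOrder R] [IsStrictOrderedRing R]

def nonnegCoeffsPosConst : Submonoid R⟦X⟧ where
  carrier := {f | f ∈ nonnegCoeffs R ∧ 0 < constantCoeff f}
  mul_mem' hf hg := ⟨mul_mem hf.1 hg.1, by rw [map_mul]; exact mul_pos hf.2 hg.2⟩
  one_mem' := ⟨one_mem _, by rw [map_one]; exact zero_lt_one⟩

variable {R}

theorem coeff_mul_pos {f g : R⟦X⟧} (hf : f ∈ nonnegCoeffs R) (hg : g ∈ nonnegCoeffsPosConst R)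
    {j : ℕ} (hfj : 0 < coeff j f) : 0 < coeff j (f * g) := by
  rw [coeff_mul]
  calc 0 < coeff j f * coeff 0 g :=
        mul_pos hfj (by rw [coeff_zero_eq_constantCoeff_apply]; exact hg.2)
    _ ≤ ∑ p ∈ antidiagonal j, coeff p.1 f * coeff p.2 g :=
      single_le_sum (f := fun p => coeff p.1 f * coeff p.2 g) (a := (j, 0))
        (fun p _ => mul_nonneg (hf p.1) (hg.1 p.2)) (mem_antidiagonal.mpr (add_zero j))

theorem rescale_mk_one_mem_nonnegCoeffsPosConst {a : R} (ha : 0 ≤ a) :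
    rescale a (mk 1) ∈ nonnegCoeffsPosConst R :=
  ⟨rescale_mem_nonnegCoeffs ha mk_one_mem_nonnegCoeffs, by
    rw [← coeff_zero_eq_constantCoeff_apply, coeff_rescale, coeff_mk, pow_zero, one_mul]
    exact zero_lt_one⟩

theorem one_add_X_mul_mem_nonnegCoeffsPosConst {f : R⟦X⟧} (hf : f ∈ nonnegCoeffs R) :
    1 + X * f ∈ nonnegCoeffsPosConst R :=
  ⟨add_mem (one_mem _) (mul_mem X_mem_nonnegCoeffs hf), by simp⟩

theorem C_add_C_mul_X_mem_nonnegCoeffsPosConst {a b : R} (ha : 0 < a) (hb : 0 ≤ b) :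
    C a + C b * X ∈ nonnegCoeffsPosConst R :=
  ⟨add_mem (C_mem_nonnegCoeffs ha.le) (mul_mem (C_mem_nonnegCoeffs hb) X_mem_nonnegCoeffs),
    by simpa using ha⟩

end PosConstCoeff

section Geometric

theorem rescale_mk_one_mul_one_sub_C_mul_X {S : Type*} [CommRing S] (a : S) :
    rescale a (mk 1) * (1 - C a * X) = 1 := by
  simpa [rescale_X] using congrArg (rescale a) (mk_one_mul_one_sub_eq_one S)

theorem inv_one_sub_C_mul_X_pow {k : Type*} [Field k] (a : k) (m : ℕ) :
    ((1 - C a * X) ^ m)⁻¹ = rescale a (mk 1) ^ m := by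
  rw [PowerSeries.inv_eq_iff_mul_eq_one (by simp), ← mul_pow,
    rescale_mk_one_mul_one_sub_C_mul_X, one_pow]

variable {S : Type*} [CommRing S]

theorem one_sub_X_mul_rescale_two :
    (1 - X) * rescale (2 : S) (mk 1) = 1 + X * rescale 2 (mk 1) := by
  have h : (1 - X : S⟦X⟧) = 1 - C 2 * X + X := by rw [map_ofNat]; ring
  rw [h, add_mul, mul_comm (1 - C 2 * X), rescale_mk_one_mul_one_sub_C_mul_X, mul_comm X]

theorem one_sub_X_pow_mul_rescale_two_pow {m k : ℕ} (h : m ≤ k) :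
    (1 - X) ^ m * rescale (2 : S) (mk 1) ^ k =
      (1 + X * rescale 2 (mk 1)) ^ m * rescale 2 (mk 1) ^ (k - m) := by
  obtain ⟨d, rfl⟩ := Nat.exists_eq_add_of_le h
  rw [pow_add, ← mul_assoc, ← mul_pow, one_sub_X_mul_rescale_two, Nat.add_sub_cancel_left]

end Geometric

end PowerSeries

theorem residueSeries_coeff_nonneg_general (n : ℕ) (ε : ℝ)
    (hε0 : 0 ≤ ε) (hε1 : ε < 1) :
    (∀ j : ℕ, 0 ≤ PowerSeries.coeff j (residueSeries n ε)) ∧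
    0 < PowerSeries.coeff n (residueSeries n ε) := by
  set g : ℝ⟦X⟧ := rescale 2 (mk 1) with hg_def
  set H : ℝ⟦X⟧ := (1 + X * g) ^ (n - 1) * g ^ (n - (n - 1)) *
    (C (1 - ε) + C ε * X) ^ (n ^ 2) *
    ∏ l ∈ Icc 2 (n - 1), rescale (((l : ℝ) + 1) / l) (mk 1) ^ (n + 1) with hH_def
  have hdecomp : residueSeries n ε = g * H := by
    rw [residueSeries, hH_def, hg_def, ← one_sub_X_pow_mul_rescale_two_pow (Nat.sub_le n 1),
      ← map_ofNat C 2]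
    simp_rw [inv_one_sub_C_mul_X_pow]
    ring
  have hg : g ∈ nonnegCoeffsPosConst ℝ := rescale_mk_one_mem_nonnegCoeffsPosConst zero_le_two
  have hH : H ∈ nonnegCoeffsPosConst ℝ :=
    mul_mem (mul_mem (mul_mem (pow_mem (one_add_X_mul_mem_nonnegCoeffsPosConst hg.1) _)
      (pow_mem hg _)) (pow_mem (C_add_C_mul_X_mem_nonnegCoeffsPosConst (sub_pos.2 hε1) hε0) _))
      (prod_mem fun l _ => pow_mem (rescale_mk_one_mem_nonnegCoeffsPosConst (by positivity)) _)
  rw [hdecomp]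
  exact ⟨(mul_mem hg.1 hH.1 :), coeff_mul_pos hg.1 hH (by
    rw [coeff_rescale, coeff_mk, Pi.one_apply, mul_one]; positivity)⟩

/-- For `n ≥ 2` and `0 ≤ ε < 1`, every coefficient of the power series `G(t)` is
nonnegative, and the coefficient of `t^n` is strictly positive. -/
theorem residueSeries_coeff_nonneg (n : ℕ) (hn : 2 ≤ n) (ε : ℝ)
    (hε0 : 0 ≤ ε) (hε1 : ε < 1) :
    (∀ j : ℕ, 0 ≤ PowerSeries.coeff j (residueSeries n ε)) ∧
    0 < PowerSeries.coeff n (residueSeries n ε) :=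
  residueSeries_coeff_nonneg_general n ε hε0 hε1
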